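/- Separation theorem for closed congruences: Let W ⊆ (ℝmax^n)^2 be a closed congruence and let s, t ∈ ℝmax^n be such that (s,t) ∉ W. Then there exists y ∈ ℝmax^n such that max_i (f_i + y_i) = max_j (g_j + y_j) for every (f,g) ∈ W, while max_i (s_i + y_i) ≠ max_j (t_j + y_j). -/

import Mathlib

open scoped Classical

noncomputable section

/-- The max-plus semiring `ℝmax = ℝ ∪ {-∞}`. Its `Add` is the max-plus
"multiplication" `a ⊗ b = a + b` (with `-∞` absorbing), its `max` is the
max-plus "addition". -/
abbrev Rmax := WithBot ℝ

/-- The order topology on `WithBot ℝ` (the topology of the metric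
`d(a,b) = |exp a - exp b|`). -/
instance : TopologicalSpace Rmax := Preorder.topology Rmax
instance : OrderTopology Rmax := ⟨rfl⟩

/-- Vectors of the max-plus semimodule `ℝmax^n`. -/
abbrev RmaxVec (n : ℕ) := Fin n → Rmax

/-- The max-plus linear combination `xλ ⊕ yμ`. -/
def maxComb {n : ℕ} (x y : RmaxVec n) (lam mu : Rmax) : RmaxVec n :=
  fun i => max (x i + lam) (y i + mu)

/-- `V ⊆ ℝmax^n` is a (max-plus) subsemimodule. -/
def IsSubsemimodule {n : ℕ} (V : Set (RmaxVec n)) : Prop :=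
  ∀ x ∈ V, ∀ y ∈ V, ∀ lam mu : Rmax, maxComb x y lam mu ∈ V

/-- `W ⊆ (ℝmax^n)² ≅ ℝmax^{2n}` is a (max-plus) subsemimodule,
with the entrywise operations. -/
def IsSubsemimodulePair {n : ℕ} (W : Set (RmaxVec n × RmaxVec n)) : Prop :=
  ∀ p ∈ W, ∀ q ∈ W, ∀ lam mu : Rmax,
    (maxComb p.1 q.1 lam mu, maxComb p.2 q.2 lam mu) ∈ W

/-- A pre-congruence: a subsemimodule of `(ℝmax^n)²` containing the diagonal
and transitive. -/
def IsPrecongruence {n : ℕ} (W : Set (RmaxVec n × RmaxVec n)) : Prop :=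
  IsSubsemimodulePair W ∧ (∀ f : RmaxVec n, (f, f) ∈ W) ∧
    ∀ f g h : RmaxVec n, (f, g) ∈ W → (g, h) ∈ W → (f, h) ∈ W

/-- A polar cone: a pre-congruence such that `f ≤ g` implies `(f,g) ∈ W`. -/
def IsPolarCone {n : ℕ} (W : Set (RmaxVec n × RmaxVec n)) : Prop :=
  IsPrecongruence W ∧ ∀ f g : RmaxVec n, f ≤ g → (f, g) ∈ W

/-- A congruence: a symmetric pre-congruence. -/
def IsCongruence {n : ℕ} (W : Set (RmaxVec n × RmaxVec n)) : Prop :=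
  IsPrecongruence W ∧ ∀ f g : RmaxVec n, (f, g) ∈ W → (g, f) ∈ W

/-- The max-plus bracket `⟨y, x⟩ = max_i (y_i + x_i)`. -/
def mpBracket {n : ℕ} (y x : RmaxVec n) : Rmax :=
  Finset.univ.sup fun i => y i + x i

/-- The polar `V°` of `V ⊆ ℝmax^n`. -/
def mpPolar {n : ℕ} (V : Set (RmaxVec n)) : Set (RmaxVec n × RmaxVec n) :=
  { p | ∀ x ∈ V, mpBracket p.1 x ≤ mpBracket p.2 x }

/-- The orthogonal `V⊥` of `V ⊆ ℝmax^n`. -/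
def mpOrtho {n : ℕ} (V : Set (RmaxVec n)) : Set (RmaxVec n × RmaxVec n) :=
  { p | ∀ x ∈ V, mpBracket p.1 x = mpBracket p.2 x }

/-- The dual polar `W⋄` of `W ⊆ (ℝmax^n)²`. -/
def mpDiamond {n : ℕ} (W : Set (RmaxVec n × RmaxVec n)) : Set (RmaxVec n) :=
  { x | ∀ p ∈ W, mpBracket p.1 x ≤ mpBracket p.2 x }

/-- The dual orthogonal `W⊤` of `W ⊆ (ℝmax^n)²`. -/
def mpTop {n : ℕ} (W : Set (RmaxVec n × RmaxVec n)) : Set (RmaxVec n) :=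
  { x | ∀ p ∈ W, mpBracket p.1 x = mpBracket p.2 x }

/-!
A congruence `W` induces the polar cone `{(f, g) | (f ⊕ g, g) ∈ W}`, from which `W` is recovered by
symmetrisation, so it suffices to separate points from closed polar cones `P` by an inequality
`⟨f, x⟩ ≤ ⟨g, x⟩`. For that, replace `t` by a nearby `u = t ⊕ c` with no `-∞` entry and
`(s, u) ∉ P` (closedness). Since `P` is stable under `⊕` on the left, under decreasing the left
entry and under adding constants, `{g | (g, u + r) ∈ P}` is determined coordinatewise by closed
lower sets of `ℝmax`, which are intervals `[-∞, c]`; this exhibits it as the half-space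
`{g | ⟨g, x⟩ ≤ r}` for one `x`. Transitivity of `P` then makes `x` separate.
-/

open Function Set

namespace Rmax

lemma eq_univ_or_eq_Iic_of_isLowerSet {S : Set Rmax} (hlow : IsLowerSet S) (hclosed : IsClosed S)
    {r : ℝ} (hr : (r : Rmax) ∈ S) : S = univ ∨ ∃ c : ℝ, S = Iic (c : Rmax) := by
  by_cases hbdd : BddAbove S
  · obtain ⟨c, hc⟩ := WithBot.ne_bot_iff_exists.1
      (ne_bot_of_le_ne_bot WithBot.coe_ne_bot (le_csSup hbdd hr))
    have hmem : (c : Rmax) ∈ S := hc ▸ hclosed.csSup_mem ⟨_, hr⟩ hbdd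
    exact Or.inr ⟨c, Subset.antisymm (fun μ hμ => hc ▸ le_csSup hbdd hμ)
      (fun μ hμ => hlow hμ hmem)⟩
  · refine Or.inl (eq_univ_of_forall fun μ => ?_)
    obtain ⟨ν, hν, hμν⟩ := not_bddAbove_iff.1 hbdd μ
    exact hlow hμν.le hν

lemma exists_add_neg_mem_iff {S : Set Rmax} (hlow : IsLowerSet S) (hclosed : IsClosed S)
    {a : ℝ} (ha : (a : Rmax) ∈ S) :
    ∃ x : Rmax, ∀ (μ : Rmax) (r : ℝ), μ + ↑(-r) ∈ S ↔ μ + x ≤ r := by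
  rcases eq_univ_or_eq_Iic_of_isLowerSet hlow hclosed ha with rfl | ⟨c, rfl⟩
  · exact ⟨⊥, by simp⟩
  · refine ⟨↑(-c), fun μ r => ?_⟩
    induction μ using WithBot.recBotCoe with
    | bot => simp
    | coe b =>
      simp only [mem_Iic]
      norm_cast
      constructor <;> intro <;> linarith

end Rmax

section Semimodule

variable {n : ℕ}

lemma maxComb_zero_zero (x y : RmaxVec n) : maxComb x y 0 0 = x ⊔ y := by
  funext i; simp [maxComb]

lemma maxComb_self_bot (x : RmaxVec n) (c : Rmax) : maxComb x x c ⊥ = fun i => x i + c := by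
  funext i; simp [maxComb]

lemma maxComb_sup_maxComb (f₁ f₂ g₁ g₂ : RmaxVec n) (lam mu : Rmax) :
    maxComb f₁ g₁ lam mu ⊔ maxComb f₂ g₂ lam mu = maxComb (f₁ ⊔ f₂) (g₁ ⊔ g₂) lam mu := by
  funext i
  simp only [maxComb, Pi.sup_apply, ← max_add_add_right]
  exact max_max_max_comm _ _ _ _

variable {W : Set (RmaxVec n × RmaxVec n)}

lemma IsSubsemimodulePair.sup_mem (hW : IsSubsemimodulePair W) {f g f' g' : RmaxVec n}
    (h : (f, g) ∈ W) (h' : (f', g') ∈ W) : (f ⊔ f', g ⊔ g') ∈ W := by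
  simpa only [maxComb_zero_zero] using hW _ h _ h' 0 0

lemma IsSubsemimodulePair.add_const_mem (hW : IsSubsemimodulePair W) {f g : RmaxVec n}
    (h : (f, g) ∈ W) (c : Rmax) : ((fun i => f i + c), fun i => g i + c) ∈ W := by
  simpa only [maxComb_self_bot] using hW _ h _ h c ⊥

lemma IsSubsemimodulePair.mem_add_coe_iff (hW : IsSubsemimodulePair W) {g u : RmaxVec n}
    (r : ℝ) : (g, fun i => u i + r) ∈ W ↔ ((fun i => g i + ↑(-r)), u) ∈ W := by
  have cancel : ∀ (μ : Rmax) {a b : ℝ}, a + b = 0 → μ + a + b = μ := fun μ a b hab => by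
    rw [add_assoc, ← WithBot.coe_add, hab, WithBot.coe_zero, add_zero]
  constructor
  · intro h
    simpa only [cancel _ (add_neg_cancel r)] using hW.add_const_mem h ↑(-r)
  · intro h
    simpa only [cancel _ (neg_add_cancel r)] using hW.add_const_mem h r

end Semimodule

lemma IsClosed.exists_bot_lt_max_notMem {n : ℕ} {W : Set (RmaxVec n × RmaxVec n)}
    (hclosed : IsClosed W) {s t : RmaxVec n} (hst : (s, t) ∉ W) :
    ∃ c : Rmax, ⊥ < c ∧ (s, fun i => max (t i) c) ∉ W := by
  have hcont : Continuous fun c : Rmax => ((s, fun i => max (t i) c) : RmaxVec n × RmaxVec n) :=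
    continuous_const.prodMk (continuous_pi fun i => continuous_const.max continuous_id)
  have hnhds : {c : Rmax | (s, fun i => max (t i) c) ∉ W} ∈ nhds ⊥ :=
    hcont.continuousAt.preimage_mem_nhds (hclosed.isOpen_compl.mem_nhds (by simpa using hst))
  obtain ⟨a, hbot_a, hsub⟩ := nhds_bot_basis.mem_iff.1 hnhds
  obtain ⟨c, hbot_c, hca⟩ := exists_between hbot_a
  exact ⟨c, hbot_c, hsub hca⟩

namespace IsPolarCone

variable {n : ℕ} {W : Set (RmaxVec n × RmaxVec n)}

lemma mem_of_le_left (hW : IsPolarCone W) {f f' h : RmaxVec n} (hle : f' ≤ f)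
    (hf : (f, h) ∈ W) : (f', h) ∈ W :=
  hW.1.2.2 _ _ _ (hW.2 _ _ hle) hf

lemma sup_mem_left (hW : IsPolarCone W) {f g h : RmaxVec n} (hf : (f, h) ∈ W)
    (hg : (g, h) ∈ W) : (f ⊔ g, h) ∈ W := by
  simpa only [sup_idem] using hW.1.1.sup_mem hf hg

lemma mem_iff_forall_update (hW : IsPolarCone W) {g h : RmaxVec n} :
    (g, h) ∈ W ↔ ∀ j, (update ⊥ j (g j), h) ∈ W := by
  refine ⟨fun hg j => hW.mem_of_le_left (update_le_iff.2 ⟨le_rfl, fun _ _ => bot_le⟩) hg,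
    fun hall => ?_⟩
  have hdecomp : Finset.univ.sup (fun j => update ⊥ j (g j)) = g :=
    le_antisymm (Finset.sup_le fun j _ => update_le_iff.2 ⟨le_rfl, fun _ _ => bot_le⟩)
      fun i => by simpa using Finset.le_sup (f := fun j => update ⊥ j (g j)) (Finset.mem_univ i) i
  rw [← hdecomp]
  exact Finset.sup_induction (p := fun f => (f, h) ∈ W) (hW.2 _ _ bot_le)
    (fun _ h₁ _ h₂ => hW.sup_mem_left h₁ h₂) fun j _ => hall j

lemma exists_mem_add_coe_iff_bracket_le (hW : IsPolarCone W) (hclosed : IsClosed W)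
    {u : RmaxVec n} (hu : ∀ i, u i ≠ ⊥) :
    ∃ x : RmaxVec n, ∀ (g : RmaxVec n) (r : ℝ),
      (g, fun i => u i + r) ∈ W ↔ mpBracket g x ≤ r := by
  have hcoord : ∀ j, ∃ xj : Rmax, ∀ (μ : Rmax) (r : ℝ),
      (update ⊥ j (μ + ↑(-r)), u) ∈ W ↔ μ + xj ≤ r := by
    intro j
    obtain ⟨c, hc⟩ := WithBot.ne_bot_iff_exists.1 (hu j)
    let S : Set Rmax := {μ | (update (⊥ : RmaxVec n) j μ, u) ∈ W}
    have hlow : IsLowerSet S := fun _ _ hle hmem => hW.mem_of_le_left (update_mono hle) hmem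
    have hclosedS : IsClosed S :=
      hclosed.preimage ((continuous_const.update j continuous_id).prodMk continuous_const)
    have hc : (c : Rmax) ∈ S := hW.2 _ _ (update_le_iff.2 ⟨hc.le, fun _ _ => bot_le⟩)
    exact Rmax.exists_add_neg_mem_iff hlow hclosedS hc
  choose x hx using hcoord
  refine ⟨x, fun g r => ?_⟩
  rw [hW.1.1.mem_add_coe_iff, hW.mem_iff_forall_update, mpBracket, Finset.sup_le_iff]
  simp only [hx, Finset.mem_univ, true_implies]

theorem exists_separating (hW : IsPolarCone W) (hclosed : IsClosed W) {s t : RmaxVec n}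
    (hst : (s, t) ∉ W) :
    ∃ x : RmaxVec n, (∀ p ∈ W, mpBracket p.1 x ≤ mpBracket p.2 x) ∧
      mpBracket t x < mpBracket s x := by
  obtain ⟨c, hc, hsu⟩ := hclosed.exists_bot_lt_max_notMem hst
  set u : RmaxVec n := fun i => max (t i) c
  obtain ⟨x, hx⟩ := hW.exists_mem_add_coe_iff_bracket_le hclosed (u := u)
    fun i => (hc.trans_le (le_max_right _ _)).ne'
  have hx₀ : ∀ g, (g, u) ∈ W ↔ mpBracket g x ≤ 0 := by
    simpa only [WithBot.coe_zero, add_zero] using fun g => hx g 0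
  have hmono : ∀ p ∈ W, mpBracket p.1 x ≤ mpBracket p.2 x := fun ⟨f, g⟩ hfg =>
    WithBot.forall_le_coe_iff_le.1 fun r hr => (hx f r).1 (hW.1.2.2 _ _ _ hfg ((hx g r).2 hr))
  refine ⟨x, hmono, ?_⟩
  calc mpBracket t x ≤ mpBracket u x := hmono (t, u) (hW.2 _ _ fun i => le_max_left _ _)
    _ ≤ 0 := (hx₀ u).1 (hW.1.2.1 u)
    _ < mpBracket s x := lt_of_not_ge fun h => hsu ((hx₀ s).2 h)

end IsPolarCone

section Congruence

variable {n : ℕ} {W : Set (RmaxVec n × RmaxVec n)}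

def congruenceLE (W : Set (RmaxVec n × RmaxVec n)) : Set (RmaxVec n × RmaxVec n) :=
  {p | (p.1 ⊔ p.2, p.2) ∈ W}

lemma IsClosed.congruenceLE (hclosed : IsClosed W) : IsClosed (congruenceLE W) := by
  have hcont : Continuous fun p : RmaxVec n × RmaxVec n => (p.1 ⊔ p.2, p.2) := by
    refine .prodMk (continuous_pi fun i => ?_) continuous_snd
    exact ((continuous_apply i).comp continuous_fst).max ((continuous_apply i).comp continuous_snd)
  exact hclosed.preimage hcont

namespace IsCongruence

lemma isPolarCone_congruenceLE (hW : IsCongruence W) : IsPolarCone (congruenceLE W) := by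
  obtain ⟨⟨hsub, hdiag, htrans⟩, hsymm⟩ := hW
  refine ⟨⟨fun p hp q hq lam mu => ?_, fun f => ?_, fun f g h hfg hgh => ?_⟩,
    fun f g hle => ?_⟩
  · simpa only [congruenceLE, mem_ofPred_eq, maxComb_sup_maxComb] using hsub _ hp _ hq lam mu
  · simpa only [congruenceLE, mem_ofPred_eq, sup_idem] using hdiag f
  · simp only [congruenceLE, mem_ofPred_eq] at hfg hgh ⊢
    have hfgh : (f ⊔ g ⊔ h, h) ∈ W := htrans _ _ _ (hsub.sup_mem hfg (hdiag h)) hgh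
    have hfh : (h ⊔ (f ⊔ h), f ⊔ g ⊔ h ⊔ (f ⊔ h)) ∈ W :=
      hsub.sup_mem (hsymm _ _ hfgh) (hdiag (f ⊔ h))
    rw [sup_eq_right.2 le_sup_right, sup_eq_left.2 (sup_le_sup_right le_sup_left h)] at hfh
    exact htrans _ _ _ hfh hfgh
  · simpa only [congruenceLE, mem_ofPred_eq, sup_eq_right.2 hle] using hdiag g

lemma mem_congruenceLE (hW : IsCongruence W) {f g : RmaxVec n} (hfg : (f, g) ∈ W) :
    (f, g) ∈ congruenceLE W := by
  simpa only [congruenceLE, mem_ofPred_eq, sup_idem] using hW.1.1.sup_mem hfg (hW.1.2.1 g)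

lemma mem_of_mem_congruenceLE (hW : IsCongruence W) {f g : RmaxVec n}
    (hfg : (f, g) ∈ congruenceLE W) (hgf : (g, f) ∈ congruenceLE W) : (f, g) ∈ W := by
  have hgf' : (f ⊔ g, f) ∈ W := sup_comm f g ▸ hgf
  exact hW.1.2.2 _ _ _ (hW.2 _ _ hgf') hfg

lemma exists_separating (hW : IsCongruence W) (hclosed : IsClosed W) {s t : RmaxVec n}
    (hst : (s, t) ∉ congruenceLE W) :
    ∃ y : RmaxVec n, (∀ p ∈ W, mpBracket p.1 y = mpBracket p.2 y) ∧
      mpBracket t y < mpBracket s y := by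
  obtain ⟨y, hmono, hlt⟩ :=
    hW.isPolarCone_congruenceLE.exists_separating hclosed.congruenceLE hst
  exact ⟨y, fun ⟨f, g⟩ hfg => le_antisymm (hmono _ (hW.mem_congruenceLE hfg))
    (hmono _ (hW.mem_congruenceLE (hW.2 _ _ hfg))), hlt⟩

end IsCongruence

end Congruence

/-- **Separation theorem for closed congruences** (Theorem 4.9 of the paper).
If `W ⊆ (ℝmax^n)²` is a closed congruence and `(s,t) ∉ W`, then there is
`y ∈ ℝmax^n` with `max_i (f_i + y_i) = max_j (g_j + y_j)` for all `(f,g) ∈ W`,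
while `max_i (s_i + y_i) ≠ max_j (t_j + y_j)`. -/
theorem separation_closed_congruence (n : ℕ) (W : Set (RmaxVec n × RmaxVec n))
    (hclosed : IsClosed W) (hW : IsCongruence W) (s t : RmaxVec n)
    (hst : (s, t) ∉ W) :
    ∃ y : RmaxVec n,
      (∀ p ∈ W, mpBracket p.1 y = mpBracket p.2 y) ∧
      mpBracket s y ≠ mpBracket t y := by
  rcases not_and_or.1 fun h => hst (hW.mem_of_mem_congruenceLE h.1 h.2) with hst' | hts'
  · obtain ⟨y, hy, hlt⟩ := hW.exists_separating hclosed hst'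
    exact ⟨y, hy, hlt.ne'⟩
  · obtain ⟨y, hy, hlt⟩ := hW.exists_separating hclosed hts'
    exact ⟨y, hy, hlt.ne⟩
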